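/- Let g(n) denote the number of length-n factors of the Thue-Morse word with intertwining sequence (ABBA)^ω, and let b(n) = A060973(n), the sequence satisfying b(0)=0, b(1)=0, b(2)=1, b(2n)=2b(n)+[n=1], b(2n+1)=b(n+1)+b(n). Then g(n+1) = b(n) for all n ≥ 0. -/

import Mathlib

open scoped Classical

/-- The Thue-Morse word: parity of the binary digit sum. -/
def tm (n : ℕ) : ℕ := (Nat.digits 2 n).sum % 2

/-- `t[j..j+n-1] = t[i..i+n-1]` : an occurrence at `j` of the factor `t[i..i+n-1]`. -/
def feq (i j n : ℕ) : Prop := ∀ k < n, tm (j + k) = tm (i + k)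

/-- `t[j..j+n-1]` is the binary complement of `t[i..i+n-1]`. -/
def feqc (i j n : ℕ) : Prop := ∀ k < n, tm (j + k) = 1 - tm (i + k)

/-- Positions of occurrences of `x = t[i..i+n-1]` or its complement. -/
def occSet (i n : ℕ) : ℕ → Prop := fun j => feq i j n ∨ feqc i j n

/-- The intertwining sequence of `x = t[i..i+n-1]`: at index `m`, the label of the
`m`-th (in increasing order of position) occurrence of `x` or its complement;
`0` codes `A` (an occurrence of `x`), `1` codes `B` (an occurrence of the complement). -/
noncomputable def itw (i n m : ℕ) : ℕ :=
  if feq i (Nat.nth (occSet i n) m) n then 0 else 1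

/-- The intertwining sequence is `(AB)^ω`. -/
def ABpat (i n : ℕ) : Prop := ∀ m, itw i n m = m % 2

/-- The intertwining sequence is `(BA)^ω`. -/
def BApat (i n : ℕ) : Prop := ∀ m, itw i n m = (m + 1) % 2

/-- The intertwining sequence is `(ABBA)^ω`. -/
def ABBApat (i n : ℕ) : Prop :=
  ∀ m, itw i n m = if m % 4 = 0 ∨ m % 4 = 3 then 0 else 1

/-- The intertwining sequence is `(BAAB)^ω`. -/
def BAABpat (i n : ℕ) : Prop :=
  ∀ m, itw i n m = if m % 4 = 0 ∨ m % 4 = 3 then 1 else 0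

/-- The length-`n` factor of the Thue-Morse word starting at position `i`, as a word. -/
def fac (i n : ℕ) : List ℕ := (List.range n).map (fun k => tm (i + k))

/-- Number of length-`n` factors of the Thue-Morse word with intertwining
sequence (AB)^ω. -/
noncomputable def fcount (n : ℕ) : ℕ :=
  Set.ncard {w : List ℕ | ∃ i, fac i n = w ∧ ABpat i n}

/-- Number of length-`n` factors of the Thue-Morse word with intertwining
sequence (ABBA)^ω. -/
noncomputable def gcount (n : ℕ) : ℕ :=
  Set.ncard {w : List ℕ | ∃ i, fac i n = w ∧ ABBApat i n}





lemma tm_le_one (n : ℕ) : tm n ≤ 1 := Nat.lt_succ_iff.mp (Nat.mod_lt _ (by norm_num))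

lemma tm_zero : tm 0 = 0 := by simp [tm]

lemma tm_two_mul (n : ℕ) : tm (2 * n) = tm n := by
  rcases Nat.eq_zero_or_pos n with h | h
  · simp [h, tm]
  · unfold tm
    rw [Nat.digits_def' (by norm_num : 1 < 2) (by omega)]
    simp [Nat.mul_div_cancel_left _ (by norm_num : 0 < 2)]

lemma tm_two_mul_add_one (n : ℕ) : tm (2 * n + 1) = 1 - tm n := by
  unfold tm
  rw [Nat.digits_def' (by norm_num : 1 < 2) (by omega)]
  have : (2 * n + 1) % 2 = 1 := by omega
  have h2 : (2 * n + 1) / 2 = n := by omega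
  rw [this, h2]
  simp only [List.sum_cons]
  omega

lemma tm_even_ne (c : ℕ) : tm (2 * c) ≠ tm (2 * c + 1) := by
  rw [tm_two_mul, tm_two_mul_add_one]
  have := tm_le_one c; omega

lemma tm_one : tm 1 = 1 := by have := tm_two_mul_add_one 0; simpa [tm_zero] using this


-- count of an image under j ↦ 2j+r
lemma count_shift (q : ℕ → Prop) (r x : ℕ) :
    Nat.count (fun y => ∃ c, q c ∧ y = 2 * c + r) (2 * x + r) = Nat.count q x := by
  classical
  rw [Nat.count_eq_card_filter_range, Nat.count_eq_card_filter_range]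
  refine (Finset.card_bij (fun a _ => 2 * a + r) ?_ ?_ ?_).symm
  · intro a ha
    simp only [Finset.mem_filter, Finset.mem_range] at ha ⊢
    exact ⟨by omega, a, ha.2, rfl⟩
  · intro a _ b _ h; omega
  · intro b hb
    simp only [Finset.mem_filter, Finset.mem_range] at hb
    obtain ⟨hlt, c, hc, rfl⟩ := hb
    exact ⟨c, by simp only [Finset.mem_filter, Finset.mem_range]; exact ⟨by omega, hc⟩, rfl⟩

lemma nth_image (q : ℕ → Prop) (hq : (setOf q).Infinite) (r k : ℕ) :
    Nat.nth (fun y => ∃ c, q c ∧ y = 2 * c + r) k = 2 * Nat.nth q k + r := by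
  classical
  have hm : q (Nat.nth q k) := Nat.nth_mem_of_infinite hq k
  have h1 : Nat.count (fun y => ∃ c, q c ∧ y = 2 * c + r) (2 * Nat.nth q k + r) = k := by
    rw [count_shift, Nat.count_nth_of_infinite hq]
  have h2 : (fun y => ∃ c, q c ∧ y = 2 * c + r) (2 * Nat.nth q k + r) := ⟨_, hm, rfl⟩
  calc Nat.nth _ k = Nat.nth _ (Nat.count (fun y => ∃ c, q c ∧ y = 2 * c + r)
      (2 * Nat.nth q k + r)) := by rw [h1]
  _ = 2 * Nat.nth q k + r := Nat.nth_count h2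

-- count of the "paired" set {2a, 2a+1 : a ∈ q}
lemma count_pair (q : ℕ → Prop) (x : ℕ) :
    Nat.count (fun j => q (j / 2)) (2 * x) = 2 * Nat.count q x := by
  classical
  induction x with
  | zero => simp
  | succ x ih =>
    have e1 : 2 * (x + 1) = (2 * x + 1) + 1 := by ring
    rw [e1, Nat.count_succ, Nat.count_succ, ih, Nat.count_succ]
    have : (2 * x + 1) / 2 = x := by omega
    have h2 : (2 * x) / 2 = x := by omega
    rw [this, h2]
    by_cases h : q x <;> simp [h] <;> omega

lemma count_pair' (q : ℕ → Prop) (x : ℕ) (hx : q x) :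
    Nat.count (fun j => q (j / 2)) (2 * x + 1) = 2 * Nat.count q x + 1 := by
  classical
  rw [Nat.count_succ, count_pair]
  have : (2 * x) / 2 = x := by omega
  rw [this]; simp [hx]

lemma nth_pair_even (q : ℕ → Prop) (hq : (setOf q).Infinite) (k : ℕ) :
    Nat.nth (fun j => q (j / 2)) (2 * k) = 2 * Nat.nth q k := by
  classical
  have hm : q (Nat.nth q k) := Nat.nth_mem_of_infinite hq k
  have h1 : Nat.count (fun j => q (j / 2)) (2 * Nat.nth q k) = 2 * k := by
    rw [count_pair, Nat.count_nth_of_infinite hq]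
  have h2 : (fun j => q (j / 2)) (2 * Nat.nth q k) := by
    have : (2 * Nat.nth q k) / 2 = Nat.nth q k := by omega
    simpa [this] using hm
  calc Nat.nth _ (2 * k) = Nat.nth _ (Nat.count (fun j => q (j / 2)) (2 * Nat.nth q k)) := by
        rw [h1]
  _ = 2 * Nat.nth q k := Nat.nth_count h2

lemma nth_pair_odd (q : ℕ → Prop) (hq : (setOf q).Infinite) (k : ℕ) :
    Nat.nth (fun j => q (j / 2)) (2 * k + 1) = 2 * Nat.nth q k + 1 := by
  classical
  have hm : q (Nat.nth q k) := Nat.nth_mem_of_infinite hq k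
  have h1 : Nat.count (fun j => q (j / 2)) (2 * Nat.nth q k + 1) = 2 * k + 1 := by
    rw [count_pair' _ _ hm, Nat.count_nth_of_infinite hq]
  have h2 : (fun j => q (j / 2)) (2 * Nat.nth q k + 1) := by
    have : (2 * Nat.nth q k + 1) / 2 = Nat.nth q k := by omega
    simpa [this] using hm
  calc Nat.nth _ (2 * k + 1)
      = Nat.nth _ (Nat.count (fun j => q (j / 2)) (2 * Nat.nth q k + 1)) := by rw [h1]
  _ = 2 * Nat.nth q k + 1 := Nat.nth_count h2

lemma nth_true (m : ℕ) : Nat.nth (fun _ => True) m = m := by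
  classical
  have hc : ∀ n, Nat.count (fun _ : ℕ => True) n = n := by
    intro n; induction n with
    | zero => simp
    | succ n ih => rw [Nat.count_succ, ih]; simp
  calc Nat.nth _ m = Nat.nth _ (Nat.count (fun _ : ℕ => True) m) := by rw [hc]
  _ = m := Nat.nth_count trivial

lemma no_between (p : ℕ → Prop) (hp : (setOf p).Infinite) (k d : ℕ)
    (hd : p d) (h1 : Nat.nth p k < d) (h2 : d < Nat.nth p (k + 1)) : False := by
  classical
  have hcd : Nat.nth p (Nat.count p d) = d := Nat.nth_count hd
  have hub : Nat.count p d ≤ k + 1 := by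
    by_contra h
    have : Nat.nth p (k + 1) < Nat.nth p (Nat.count p d) := (Nat.nth_lt_nth hp).mpr (by omega)
    omega
  have hlb : k < Nat.count p d := by
    by_contra h
    have : Nat.nth p (Nat.count p d) ≤ Nat.nth p k := (Nat.nth_le_nth hp).mpr (by omega)
    omega
  have : Nat.count p d = k + 1 := by omega
  rw [this] at hcd; omega



/-- the set of "change points" of the Thue-Morse word -/
def Epred : ℕ → Prop := fun c => tm c ≠ tm (c + 1)

/-- positions where two consecutive letters agree -/
def Dpred : ℕ → Prop := fun c => tm c = tm (c + 1)

lemma Epred_infinite : (setOf Epred).Infinite := by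
  refine Set.infinite_of_injective_forall_mem (f := fun c : ℕ => 2 * c) ?_ ?_
  · intro a b h; simp only [] at h; omega
  · intro c
    have := tm_even_ne c
    exact this

lemma tm_nth_Epred (k : ℕ) : tm (Nat.nth Epred k) = k % 2 := by
  induction k with
  | zero =>
    have h0 : Epred 0 := by
      have := tm_even_ne 0; simpa [Epred] using this
    have : Nat.nth Epred 0 = 0 := by
      rw [Nat.nth_zero]
      exact Nat.sInf_eq_zero.mpr (Or.inl h0)
    rw [this, tm_zero]
  | succ k ih =>
    set c := Nat.nth Epred k with hc
    set c' := Nat.nth Epred (k + 1) with hc'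
    have hlt : c < c' := (Nat.nth_lt_nth Epred_infinite).mpr (by omega)
    have hcE : Epred c := Nat.nth_mem_of_infinite Epred_infinite k
    -- tm is constant on [c+1, c']
    have hconst : ∀ d, c + 1 ≤ d → d ≤ c' → tm d = tm (c + 1) := by
      intro d
      induction d with
      | zero => intro h _; omega
      | succ d ihd =>
        intro h1 h2
        rcases Nat.lt_or_ge (c + 1) (d + 1) with h | h
        · have hd1 : c + 1 ≤ d := by omega
          have hd2 : d ≤ c' := by omega
          have hdE : ¬ Epred d := by
            intro hE
            exact no_between Epred Epred_infinite k d hE (by omega)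
              (by rcases Nat.lt_or_ge d c' with h | h; exact h; omega)
          have : tm (d + 1) = tm d := by
            simp only [Epred, not_not] at hdE; omega
          rw [this]; exact ihd hd1 hd2
        · have : d + 1 = c + 1 := by omega
          rw [this]
    have h1 : tm c' = tm (c + 1) := by
      have hne : c + 1 ≤ c' := by omega
      rcases Nat.eq_or_lt_of_le hne with h | h
      · rw [← h]
      · exact hconst c' (by omega) (by omega)
    have h2 : tm (c + 1) = 1 - tm c := by
      have := hcE; simp only [Epred] at this
      have := tm_le_one c; have := tm_le_one (c + 1); omega
    have := tm_le_one c
    rw [h1, h2, ih]; omega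








-- handy tm rewrites at shifted doubled positions
lemma tmd0 (a : ℕ) : tm (2 * a) = tm a := tm_two_mul a
lemma tmd1 (a : ℕ) : tm (2 * a + 1) = 1 - tm a := tm_two_mul_add_one a
lemma tmd2 (a : ℕ) : tm (2 * a + 2) = tm (a + 1) := by
  have h : 2 * a + 2 = 2 * (a + 1) := by ring
  rw [h, tm_two_mul]
lemma tmd3 (a : ℕ) : tm (2 * a + 3) = 1 - tm (a + 1) := by
  have h : 2 * a + 3 = 2 * (a + 1) + 1 := by ring
  rw [h, tm_two_mul_add_one]

lemma no_three_eq (a : ℕ) : ¬ (tm a = tm (a + 1) ∧ tm (a + 1) = tm (a + 2)) := by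
  rintro ⟨h1, h2⟩
  rcases Nat.even_or_odd a with ⟨c, hc⟩ | ⟨c, hc⟩
  · subst hc
    have := tm_even_ne c
    have e : c + c = 2 * c := by ring
    rw [e] at h1
    exact this h1
  · have hc' : a + 1 = 2 * (c + 1) := by omega
    have hc'' : a + 2 = 2 * (c + 1) + 1 := by omega
    rw [hc', hc''] at h2
    exact tm_even_ne (c + 1) h2

lemma Dpred_iff (a : ℕ) : Dpred a ↔ ∃ c, Epred c ∧ a = 2 * c + 1 := by
  constructor
  · intro h
    rcases Nat.even_or_odd a with ⟨c, hc⟩ | ⟨c, hc⟩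
    · exfalso
      have hc2 : a = 2 * c := by omega
      subst hc2
      have := tm_even_ne c
      simp only [Dpred] at h
      exact this h
    · have hc2 : a = 2 * c + 1 := by omega
      subst hc2
      refine ⟨c, ?_, rfl⟩
      simp only [Dpred] at h
      rw [tmd1 c, tmd2 c] at h
      have := tm_le_one c; have := tm_le_one (c + 1)
      simp only [Epred]; omega
  · rintro ⟨c, hE, rfl⟩
    simp only [Dpred]
    rw [tmd1 c, tmd2 c]
    simp only [Epred] at hE
    have := tm_le_one c; have := tm_le_one (c + 1)
    omega

lemma Dpred_eq : Dpred = fun a => ∃ c, Epred c ∧ a = 2 * c + 1 :=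
  funext fun a => propext (Dpred_iff a)

lemma Dpred_infinite : (setOf Dpred).Infinite := by
  rw [Dpred_eq]
  apply Set.infinite_of_injective_forall_mem (f := fun c : ℕ => 2 * Nat.nth Epred c + 1)
  · intro a b h
    simp only [] at h
    have : Nat.nth Epred a = Nat.nth Epred b := by omega
    rcases lt_trichotomy a b with hab | hab | hab
    · exact absurd ((Nat.nth_lt_nth Epred_infinite).mpr hab) (by omega)
    · exact hab
    · exact absurd ((Nat.nth_lt_nth Epred_infinite).mpr hab) (by omega)
  · intro c
    exact ⟨Nat.nth Epred c, Nat.nth_mem_of_infinite Epred_infinite c, rfl⟩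

lemma nth_Dpred (k : ℕ) : Nat.nth Dpred k = 2 * Nat.nth Epred k + 1 := by
  rw [Dpred_eq]; exact nth_image Epred Epred_infinite 1 k

lemma tm_nth_Dpred (k : ℕ) : tm (Nat.nth Dpred k) = 1 - k % 2 := by
  rw [nth_Dpred, tmd1, tm_nth_Epred]

-- feq unfoldings
lemma feq_iff1 (i j : ℕ) : feq i j 1 ↔ tm j = tm i := by
  constructor
  · intro h; simpa using h 0 (by norm_num)
  · intro h k hk; interval_cases k; simpa using h

lemma feq_iff2 (i j : ℕ) : feq i j 2 ↔ tm j = tm i ∧ tm (j + 1) = tm (i + 1) := by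
  constructor
  · intro h; exact ⟨by simpa using h 0 (by norm_num), by simpa using h 1 (by norm_num)⟩
  · rintro ⟨a, b⟩ k hk; interval_cases k <;> simpa

lemma feq_iff3 (i j : ℕ) :
    feq i j 3 ↔ tm j = tm i ∧ tm (j + 1) = tm (i + 1) ∧ tm (j + 2) = tm (i + 2) := by
  constructor
  · intro h
    exact ⟨by simpa using h 0 (by norm_num), by simpa using h 1 (by norm_num),
      by simpa using h 2 (by norm_num)⟩
  · rintro ⟨a, b, c⟩ k hk; interval_cases k <;> simpa

lemma feqc_iff3 (i j : ℕ) :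
    feqc i j 3 ↔ tm j = 1 - tm i ∧ tm (j + 1) = 1 - tm (i + 1) ∧ tm (j + 2) = 1 - tm (i + 2) := by
  constructor
  · intro h
    exact ⟨by simpa using h 0 (by norm_num), by simpa using h 1 (by norm_num),
      by simpa using h 2 (by norm_num)⟩
  · rintro ⟨a, b, c⟩ k hk; interval_cases k <;> simpa

lemma feqc_iff2 (i j : ℕ) :
    feqc i j 2 ↔ tm j = 1 - tm i ∧ tm (j + 1) = 1 - tm (i + 1) := by
  constructor
  · intro h; exact ⟨by simpa using h 0 (by norm_num), by simpa using h 1 (by norm_num)⟩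
  · rintro ⟨a, b⟩ k hk; interval_cases k <;> simpa

lemma feqc_iff1 (i j : ℕ) : feqc i j 1 ↔ tm j = 1 - tm i := by
  constructor
  · intro h; simpa using h 0 (by norm_num)
  · intro h k hk; interval_cases k; simpa using h

lemma nth_image0 (q : ℕ → Prop) (hq : (setOf q).Infinite) (k : ℕ) :
    Nat.nth (fun y => ∃ c, q c ∧ y = 2 * c) k = 2 * Nat.nth q k := by
  have h : (fun y => ∃ c, q c ∧ y = 2 * c) = fun y => ∃ c, q c ∧ y = 2 * c + 0 := by
    funext y; simp
  rw [h, nth_image q hq 0 k]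
  omega

lemma Epred_even (a : ℕ) : Epred (2 * a) := tm_even_ne a

lemma Epred_odd_iff (a : ℕ) : Epred (2 * a + 1) ↔ Dpred a := by
  simp only [Epred, Dpred]
  rw [show 2 * a + 1 + 1 = 2 * a + 2 by omega, tmd1, tmd2]
  have := tm_le_one a; have := tm_le_one (a + 1); omega

lemma Dpred_even_false (a : ℕ) : ¬ Dpred (2 * a) := tm_even_ne a

lemma Dpred_odd_iff (a : ℕ) : Dpred (2 * a + 1) ↔ Epred a := by
  simp only [Epred, Dpred]
  rw [show 2 * a + 1 + 1 = 2 * a + 2 by omega, tmd1, tmd2]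
  have := tm_le_one a; have := tm_le_one (a + 1); omega

lemma S1 : (fun j => Epred j ∧ Epred (j + 1)) = fun j => Dpred (j / 2) := by
  funext j; apply propext
  rcases Nat.even_or_odd j with ⟨a, ha⟩ | ⟨a, ha⟩
  · have hj : j = 2 * a := by omega
    subst hj
    have h1 : (2 * a) / 2 = a := by omega
    rw [h1, show 2 * a + 1 = 2 * a + 1 from rfl]
    have h2 := Epred_even a
    have h3 := Epred_odd_iff a
    tauto
  · have hj : j = 2 * a + 1 := by omega
    subst hj
    have h1 : (2 * a + 1) / 2 = a := by omega
    rw [h1]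
    have h3 := Epred_odd_iff a
    have h4 : Epred (2 * a + 1 + 1) := by
      rw [show 2 * a + 1 + 1 = 2 * (a + 1) by omega]; exact Epred_even (a + 1)
    tauto

lemma S2 : (fun j => Epred j ∧ Dpred (j + 1)) = fun j => ∃ c, Epred c ∧ j = 2 * c := by
  funext j; apply propext
  rcases Nat.even_or_odd j with ⟨a, ha⟩ | ⟨a, ha⟩
  · have hj : j = 2 * a := by omega
    subst hj
    have h2 := Epred_even a
    have h3 : Dpred (2 * a + 1) ↔ Epred a := Dpred_odd_iff a
    constructor
    · rintro ⟨-, hD⟩; exact ⟨a, h3.mp hD, rfl⟩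
    · rintro ⟨c, hc, he⟩
      have : a = c := by omega
      subst this
      exact ⟨h2, h3.mpr hc⟩
  · have hj : j = 2 * a + 1 := by omega
    subst hj
    constructor
    · rintro ⟨-, hD⟩
      exfalso
      rw [show 2 * a + 1 + 1 = 2 * (a + 1) by omega] at hD
      exact Dpred_even_false (a + 1) hD
    · rintro ⟨c, -, he⟩; omega

lemma S3 : (fun j => Dpred j ∧ Epred (j + 1)) = fun j => ∃ c, Epred c ∧ j = 2 * c + 1 := by
  funext j; apply propext
  rcases Nat.even_or_odd j with ⟨a, ha⟩ | ⟨a, ha⟩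
  · have hj : j = 2 * a := by omega
    subst hj
    constructor
    · rintro ⟨hD, -⟩; exact absurd hD (Dpred_even_false a)
    · rintro ⟨c, -, he⟩; omega
  · have hj : j = 2 * a + 1 := by omega
    subst hj
    have h3 := Dpred_odd_iff a
    have h4 : Epred (2 * a + 1 + 1) := by
      rw [show 2 * a + 1 + 1 = 2 * (a + 1) by omega]; exact Epred_even (a + 1)
    constructor
    · rintro ⟨hD, -⟩; exact ⟨a, h3.mp hD, rfl⟩
    · rintro ⟨c, hc, he⟩
      have : a = c := by omega
      subst this
      exact ⟨h3.mpr hc, h4⟩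

lemma occ3_iff (i j : ℕ) : occSet i 3 j ↔
    ((tm j = tm (j + 1) ↔ tm i = tm (i + 1)) ∧
     (tm (j + 1) = tm (j + 2) ↔ tm (i + 1) = tm (i + 2))) := by
  have l1 := tm_le_one j; have l2 := tm_le_one (j + 1); have l3 := tm_le_one (j + 2)
  have l4 := tm_le_one i; have l5 := tm_le_one (i + 1); have l6 := tm_le_one (i + 2)
  constructor
  · rintro (h | h)
    · rw [feq_iff3] at h; omega
    · rw [feqc_iff3] at h; omega
  · intro h
    by_cases hji : tm j = tm i
    · exact Or.inl ((feq_iff3 i j).mpr (by omega))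
    · exact Or.inr ((feqc_iff3 i j).mpr (by omega))

lemma occ2_iff (i j : ℕ) : occSet i 2 j ↔ (tm j = tm (j + 1) ↔ tm i = tm (i + 1)) := by
  have l1 := tm_le_one j; have l2 := tm_le_one (j + 1)
  have l4 := tm_le_one i; have l5 := tm_le_one (i + 1)
  constructor
  · rintro (h | h)
    · rw [feq_iff2] at h; omega
    · rw [feqc_iff2] at h; omega
  · intro h
    by_cases hji : tm j = tm i
    · exact Or.inl ((feq_iff2 i j).mpr (by omega))
    · exact Or.inr ((feqc_iff2 i j).mpr (by omega))

lemma occ1_eq (i : ℕ) : occSet i 1 = fun _ => True := by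
  funext j; apply propext
  have l1 := tm_le_one j; have l4 := tm_le_one i
  simp only [iff_true]
  by_cases hji : tm j = tm i
  · exact Or.inl ((feq_iff1 i j).mpr hji)
  · exact Or.inr ((feqc_iff1 i j).mpr (by omega))

-- occ shapes for length 3
lemma occEE (i : ℕ) (h1 : tm i ≠ tm (i + 1)) (h2 : tm (i + 1) ≠ tm (i + 2)) :
    occSet i 3 = fun j => Dpred (j / 2) := by
  rw [← S1]; funext j; apply propext
  rw [occ3_iff]
  simp only [Epred]
  rw [show j + 1 + 1 = j + 2 by omega]
  have := tm_le_one j; have := tm_le_one (j + 1); have := tm_le_one (j + 2)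
  constructor
  · intro h; omega
  · intro h; omega

lemma occED (i : ℕ) (h1 : tm i ≠ tm (i + 1)) (h2 : tm (i + 1) = tm (i + 2)) :
    occSet i 3 = fun j => ∃ c, Epred c ∧ j = 2 * c := by
  rw [← S2]; funext j; apply propext
  rw [occ3_iff]
  simp only [Epred, Dpred]
  rw [show j + 1 + 1 = j + 2 by omega]
  have := tm_le_one j; have := tm_le_one (j + 1); have := tm_le_one (j + 2)
  constructor
  · intro h; omega
  · intro h; omega

lemma occDE (i : ℕ) (h1 : tm i = tm (i + 1)) (h2 : tm (i + 1) ≠ tm (i + 2)) :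
    occSet i 3 = fun j => ∃ c, Epred c ∧ j = 2 * c + 1 := by
  rw [← S3]; funext j; apply propext
  rw [occ3_iff]
  simp only [Epred, Dpred]
  rw [show j + 1 + 1 = j + 2 by omega]
  have := tm_le_one j; have := tm_le_one (j + 1); have := tm_le_one (j + 2)
  constructor
  · intro h; omega
  · intro h; omega

lemma tm_two : tm 2 = 1 := by
  have h := tm_two_mul 1
  simpa [tm_one] using h

lemma tm_four : tm 4 = 1 := by
  have h := tm_two_mul 2
  rw [show 2 * 2 = 4 by omega] at h
  rw [h, tm_two]

lemma abba_101 (i : ℕ) (h0 : tm i = 1) (h1 : tm (i + 1) = 0) (h2 : tm (i + 2) = 1) :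
    ABBApat i 3 := by
  have hocc := occEE i (by omega) (by omega)
  intro m
  unfold itw
  rw [hocc]
  rcases Nat.even_or_odd m with ⟨k, hk⟩ | ⟨k, hk⟩
  · have hm : m = 2 * k := by omega
    subst hm
    rw [nth_pair_even Dpred Dpred_infinite k]
    have hcD : Dpred (Nat.nth Dpred k) := Nat.nth_mem_of_infinite Dpred_infinite k
    have hcv := tm_nth_Dpred k
    set c := Nat.nth Dpred k with hc
    have e0 := tmd0 c; have e1 := tmd1 c; have e2 := tmd2 c
    have hD : tm c = tm (c + 1) := hcD
    have := tm_le_one c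
    simp only [feq_iff3]
    split_ifs <;> omega
  · have hm : m = 2 * k + 1 := by omega
    subst hm
    rw [nth_pair_odd Dpred Dpred_infinite k]
    have hcD : Dpred (Nat.nth Dpred k) := Nat.nth_mem_of_infinite Dpred_infinite k
    have hcv := tm_nth_Dpred k
    set c := Nat.nth Dpred k with hc
    have e1 := tmd1 c; have e2 := tmd2 c; have e3 := tmd3 c
    have hD : tm c = tm (c + 1) := hcD
    have := tm_le_one c; have := tm_le_one (c + 1)
    simp only [feq_iff3]
    rw [show 2 * c + 1 + 1 = 2 * c + 2 by omega, show 2 * c + 1 + 2 = 2 * c + 3 by omega]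
    split_ifs <;> omega

lemma not_abba_EE (i : ℕ) (h0 : tm i = 0) (h1 : tm (i + 1) = 1) (h2 : tm (i + 2) = 0) :
    ¬ ABBApat i 3 := by
  intro hpat
  have hm := hpat 0
  unfold itw at hm
  rw [occEE i (by omega) (by omega), show (0 : ℕ) = 2 * 0 by omega,
    nth_pair_even Dpred Dpred_infinite 0] at hm
  have hcD : Dpred (Nat.nth Dpred 0) := Nat.nth_mem_of_infinite Dpred_infinite 0
  have hcv := tm_nth_Dpred 0
  set c := Nat.nth Dpred 0 with hc
  have e0 := tmd0 c
  simp only [feq_iff3] at hm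
  split_ifs at hm <;> first | omega | tauto | simp_all | (simp_all; omega)

lemma not_abba_ED (i : ℕ) (h1 : tm i ≠ tm (i + 1)) (h2 : tm (i + 1) = tm (i + 2)) :
    ¬ ABBApat i 3 := by
  intro hpat
  -- counterexample at m = 0 (if tm i = 1) or m = 2 (if tm i = 0)
  have key : ∀ m : ℕ, itw i 3 m = if tm (Nat.nth Epred m) = tm i then 0 else 1 := by
    intro m
    unfold itw
    rw [occED i h1 h2, nth_image0 Epred Epred_infinite m]
    have hcE : Epred (Nat.nth Epred m) := Nat.nth_mem_of_infinite Epred_infinite m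
    set e := Nat.nth Epred m with he
    have e0 := tmd0 e; have e1 := tmd1 e; have e2 := tmd2 e
    have hE : tm e ≠ tm (e + 1) := hcE
    have := tm_le_one e; have := tm_le_one (e + 1)
    have := tm_le_one i; have := tm_le_one (i + 1); have := tm_le_one (i + 2)
    simp only [feq_iff3]
    split_ifs <;> omega
  have v0 := tm_nth_Epred 0
  have v2 := tm_nth_Epred 2
  have := tm_le_one i
  rcases Nat.eq_zero_or_pos (tm i) with h | h
  · have hm := hpat 2
    rw [key 2] at hm
    split_ifs at hm <;> first | omega | tauto | simp_all | (simp_all; omega)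
  · have hm := hpat 0
    rw [key 0] at hm
    split_ifs at hm <;> first | omega | tauto | simp_all | (simp_all; omega)

lemma not_abba_DE (i : ℕ) (h1 : tm i = tm (i + 1)) (h2 : tm (i + 1) ≠ tm (i + 2)) :
    ¬ ABBApat i 3 := by
  intro hpat
  have key : ∀ m : ℕ, itw i 3 m = if 1 - tm (Nat.nth Epred m) = tm i then 0 else 1 := by
    intro m
    unfold itw
    rw [occDE i h1 h2, nth_image Epred Epred_infinite 1 m]
    have hcE : Epred (Nat.nth Epred m) := Nat.nth_mem_of_infinite Epred_infinite m
    set e := Nat.nth Epred m with he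
    have e1 := tmd1 e; have e2 := tmd2 e; have e3 := tmd3 e
    have hE : tm e ≠ tm (e + 1) := hcE
    have := tm_le_one e; have := tm_le_one (e + 1)
    have := tm_le_one i; have := tm_le_one (i + 1); have := tm_le_one (i + 2)
    simp only [feq_iff3]
    rw [show 2 * e + 1 + 1 = 2 * e + 2 by omega, show 2 * e + 1 + 2 = 2 * e + 3 by omega]
    split_ifs <;> omega
  have v0 := tm_nth_Epred 0
  have v2 := tm_nth_Epred 2
  have := tm_le_one i
  rcases Nat.eq_zero_or_pos (tm i) with h | h
  · have hm := hpat 0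
    rw [key 0] at hm
    split_ifs at hm <;> first | omega | tauto | simp_all | (simp_all; omega)
  · have hm := hpat 2
    rw [key 2] at hm
    split_ifs at hm <;> first | omega | tauto | simp_all | (simp_all; omega)

lemma not_abba_3 (i : ℕ) (h : ¬ (tm i = 1 ∧ tm (i + 1) = 0 ∧ tm (i + 2) = 1)) :
    ¬ ABBApat i 3 := by
  have l0 := tm_le_one i; have l1 := tm_le_one (i + 1); have l2 := tm_le_one (i + 2)
  have hno := no_three_eq i
  by_cases c1 : tm i = tm (i + 1)
  · by_cases c2 : tm (i + 1) = tm (i + 2)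
    · exact absurd ⟨c1, c2⟩ hno
    · exact not_abba_DE i c1 c2
  · by_cases c2 : tm (i + 1) = tm (i + 2)
    · exact not_abba_ED i c1 c2
    · exact not_abba_EE i (by omega) (by omega) (by omega)

lemma not_abba_2 (i : ℕ) : ¬ ABBApat i 2 := by
  intro hpat
  have l0 := tm_le_one i; have l1 := tm_le_one (i + 1)
  by_cases c1 : tm i = tm (i + 1)
  · -- occ = Dpred as image
    have hocc : occSet i 2 = fun j => ∃ c, Epred c ∧ j = 2 * c + 1 := by
      rw [← Dpred_eq]
      funext j; apply propext
      rw [occ2_iff]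
      simp only [Dpred]
      have := tm_le_one j; have := tm_le_one (j + 1)
      constructor
      · intro hh; omega
      · intro hh; omega
    have key : ∀ m : ℕ, itw i 2 m = if 1 - tm (Nat.nth Epred m) = tm i then 0 else 1 := by
      intro m
      unfold itw
      rw [hocc, nth_image Epred Epred_infinite 1 m]
      have hcE : Epred (Nat.nth Epred m) := Nat.nth_mem_of_infinite Epred_infinite m
      set e := Nat.nth Epred m with he
      have e1 := tmd1 e; have e2 := tmd2 e
      have hE : tm e ≠ tm (e + 1) := hcE
      have := tm_le_one e; have := tm_le_one (e + 1)
      simp only [feq_iff2]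
      rw [show 2 * e + 1 + 1 = 2 * e + 2 by omega]
      split_ifs <;> omega
    have v0 := tm_nth_Epred 0
    have v2 := tm_nth_Epred 2
    rcases Nat.eq_zero_or_pos (tm i) with h | h
    · have hm := hpat 0
      rw [key 0] at hm
      split_ifs at hm <;> first | omega | tauto | simp_all | (simp_all; omega)
    · have hm := hpat 2
      rw [key 2] at hm
      split_ifs at hm <;> first | omega | tauto | simp_all | (simp_all; omega)
  · have hocc : occSet i 2 = Epred := by
      funext j; apply propext
      rw [occ2_iff]
      simp only [Epred]
      have := tm_le_one j; have := tm_le_one (j + 1)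
      constructor
      · intro hh; omega
      · intro hh; omega
    have key : ∀ m : ℕ, itw i 2 m = if tm (Nat.nth Epred m) = tm i then 0 else 1 := by
      intro m
      unfold itw
      rw [hocc]
      have hcE : Epred (Nat.nth Epred m) := Nat.nth_mem_of_infinite Epred_infinite m
      set e := Nat.nth Epred m with he
      have hE : tm e ≠ tm (e + 1) := hcE
      have := tm_le_one e; have := tm_le_one (e + 1)
      simp only [feq_iff2]
      split_ifs <;> omega
    have v0 := tm_nth_Epred 0
    have v2 := tm_nth_Epred 2
    rcases Nat.eq_zero_or_pos (tm i) with h | h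
    · have hm := hpat 2
      rw [key 2] at hm
      split_ifs at hm <;> first | omega | tauto | simp_all | (simp_all; omega)
    · have hm := hpat 0
      rw [key 0] at hm
      split_ifs at hm <;> first | omega | tauto | simp_all | (simp_all; omega)

lemma not_abba_1 (i : ℕ) : ¬ ABBApat i 1 := by
  intro hpat
  have l0 := tm_le_one i
  have hocc := occ1_eq i
  have key : ∀ m : ℕ, itw i 1 m = if tm m = tm i then 0 else 1 := by
    intro m
    unfold itw
    rw [hocc, nth_true m]
    simp only [feq_iff1]
  rcases Nat.eq_zero_or_pos (tm i) with h | h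
  · have hm := hpat 4
    rw [key 4] at hm
    have := tm_four
    split_ifs at hm <;> first | omega | tauto | simp_all | (simp_all; omega)
  · have hm := hpat 1
    rw [key 1] at hm
    have := tm_one
    split_ifs at hm <;> first | omega | tauto | simp_all | (simp_all; omega)

lemma tm_add_pow (K : ℕ) : ∀ a e, a < 2 ^ K → tm (a + 2 ^ K * e) = (tm a + tm e) % 2 := by
  induction K with
  | zero =>
    intro a e ha
    have : a = 0 := by omega
    subst this
    have := tm_le_one e
    simp [tm_zero]
    omega
  | succ K ih =>
    intro a e ha
    rcases Nat.even_or_odd a with ⟨b, hb⟩ | ⟨b, hb⟩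
    · have hb' : a = 2 * b := by omega
      subst hb'
      have hlt : b < 2 ^ K := by
        have : 2 ^ (K + 1) = 2 * 2 ^ K := by ring
        omega
      have e1 : 2 * b + 2 ^ (K + 1) * e = 2 * (b + 2 ^ K * e) := by ring
      rw [e1, tm_two_mul, ih b e hlt, tm_two_mul]
    · subst hb
      have hlt : b < 2 ^ K := by
        have : 2 ^ (K + 1) = 2 * 2 ^ K := by ring
        omega
      have e1 : 2 * b + 1 + 2 ^ (K + 1) * e = 2 * (b + 2 ^ K * e) + 1 := by ring
      rw [e1, tm_two_mul_add_one, ih b e hlt, tm_two_mul_add_one]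
      have := tm_le_one b; have := tm_le_one e
      omega

lemma occ_infinite (i n : ℕ) : (setOf (occSet i n)).Infinite := by
  set K := i + n with hK
  have hpow : i + n < 2 ^ K := Nat.lt_two_pow_self
  apply Set.infinite_of_injective_forall_mem (f := fun e : ℕ => i + 2 ^ K * e)
  · intro a b h
    simp only [] at h
    have h2 : (2:ℕ) ^ K > 0 := Nat.pow_pos (by norm_num)
    have := Nat.eq_of_mul_eq_mul_left h2 (by omega : 2 ^ K * a = 2 ^ K * b)
    exact this
  · intro e
    have key : ∀ k, k < n → tm (i + 2 ^ K * e + k) = (tm (i + k) + tm e) % 2 := by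
      intro k hk
      have e1 : i + 2 ^ K * e + k = (i + k) + 2 ^ K * e := by ring
      rw [e1, tm_add_pow K (i + k) e (by omega)]
    have := tm_le_one e
    rcases Nat.eq_zero_or_pos (tm e) with he | he
    · left
      intro k hk
      rw [key k hk, he]
      have := tm_le_one (i + k)
      omega
    · right
      intro k hk
      rw [key k hk]
      have := tm_le_one (i + k)
      omega

lemma occ_self (i n : ℕ) : occSet i n i := Or.inl (fun k _ => rfl)

lemma purity (i n : ℕ) (hn : 4 ≤ n) :
    ∀ j1 j2, occSet i n j1 → occSet i n j2 → j1 % 2 = j2 % 2 := by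
  have l : ∀ j, tm j ≤ 1 := tm_le_one
  -- case 1 : some adjacent pair of x (within first 4 letters) is equal
  by_cases hadj : ∃ k, k < 3 ∧ tm (i + k) = tm (i + k + 1)
  · obtain ⟨k, hk3, hkeq⟩ := hadj
    have key : ∀ j, occSet i n j → (j + k) % 2 = 1 := by
      intro j hj
      have heq : tm (j + k) = tm (j + k + 1) := by
        rcases hj with h | h
        · have a1 := h k (by omega); have a2 := h (k + 1) (by omega)
          simp only [← Nat.add_assoc] at a2
          omega
        · have a1 := h k (by omega); have a2 := h (k + 1) (by omega)
          simp only [← Nat.add_assoc] at a2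
          have := l (i + k); have := l (i + k + 1)
          omega
      rcases Nat.even_or_odd (j + k) with ⟨c, hc⟩ | ⟨c, hc⟩
      · exfalso
        have hc' : j + k = 2 * c := by omega
        rw [hc', show 2 * c + 1 = 2 * c + 1 from rfl] at heq
        exact tm_even_ne c heq
      · omega
    intro j1 j2 h1 h2
    have := key j1 h1; have := key j2 h2
    omega
  · -- case 2 : first four letters alternate; all occurrences are even
    push_neg at hadj
    have key : ∀ j, occSet i n j → j % 2 = 0 := by
      intro j hj
      have halt : ∀ k, k < 3 → tm (j + k) ≠ tm (j + k + 1) := by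
        intro k hk
        have hi := hadj k hk
        rcases hj with h | h
        · have a1 := h k (by omega); have a2 := h (k + 1) (by omega)
          simp only [← Nat.add_assoc] at a2
          omega
        · have a1 := h k (by omega); have a2 := h (k + 1) (by omega)
          simp only [← Nat.add_assoc] at a2
          have := l (i + k); have := l (i + k + 1)
          omega
      rcases Nat.even_or_odd j with ⟨a, ha⟩ | ⟨a, ha⟩
      · omega
      · exfalso
        have hj' : j = 2 * a + 1 := by omega
        subst hj'
        have b0 := halt 0 (by omega)
        have b2 := halt 2 (by omega)
        rw [show 2 * a + 1 + 0 = 2 * a + 1 by omega, show 2 * a + 1 + 0 + 1 = 2 * a + 2 by omega]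
          at b0
        rw [show 2 * a + 1 + 2 = 2 * a + 3 by omega, show 2 * a + 1 + 2 + 1 = 2 * a + 4 by omega]
          at b2
        have e1 := tmd1 a; have e2 := tmd2 a; have e3 := tmd3 a
        have e4 : tm (2 * a + 4) = tm (a + 2) := by
          rw [show 2 * a + 4 = 2 * (a + 2) by omega, tm_two_mul]
        have h3 := no_three_eq a
        have := l a; have := l (a + 1); have := l (a + 2)
        omega
    intro j1 j2 h1 h2
    have := key j1 h1; have := key j2 h2
    omega

-- doubling correspondence for feq/feqc
lemma feq_double (i j n' m r : ℕ) (hr : r ≤ 1)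
    (h1 : ∀ k, k < m → (k + r) / 2 < n') (h2 : ∀ l, l < n' → 2 * l - r < m) :
    feq i j n' ↔ feq (2 * i + r) (2 * j + r) m := by
  constructor
  · intro h k hk
    set l := (k + r) / 2 with hl
    have hln : l < n' := h1 k hk
    have hcase : k + r = 2 * l ∨ k + r = 2 * l + 1 := by omega
    have hval := h l hln
    rcases hcase with hc | hc
    · have e1 : 2 * j + r + k = 2 * (j + l) := by omega
      have e2 : 2 * i + r + k = 2 * (i + l) := by omega
      rw [e1, e2, tm_two_mul, tm_two_mul, hval]
    · have e1 : 2 * j + r + k = 2 * (j + l) + 1 := by omega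
      have e2 : 2 * i + r + k = 2 * (i + l) + 1 := by omega
      rw [e1, e2, tm_two_mul_add_one, tm_two_mul_add_one, hval]
  · intro h l hl
    have hk : 2 * l - r < m := h2 l hl
    have hval := h (2 * l - r) hk
    by_cases hc : l = 0 ∧ r = 1
    · obtain ⟨hl0, hr1⟩ := hc
      subst hl0
      have e1 : 2 * j + r + (2 * 0 - r) = 2 * j + 1 := by omega
      have e2 : 2 * i + r + (2 * 0 - r) = 2 * i + 1 := by omega
      rw [e1, e2, tm_two_mul_add_one, tm_two_mul_add_one] at hval
      have := tm_le_one j; have := tm_le_one i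
      have ej : j + 0 = j := by omega
      have ei : i + 0 = i := by omega
      rw [ej, ei]
      omega
    · have e1 : 2 * j + r + (2 * l - r) = 2 * (j + l) := by omega
      have e2 : 2 * i + r + (2 * l - r) = 2 * (i + l) := by omega
      rw [e1, e2, tm_two_mul, tm_two_mul] at hval
      exact hval

lemma feqc_double (i j n' m r : ℕ) (hr : r ≤ 1)
    (h1 : ∀ k, k < m → (k + r) / 2 < n') (h2 : ∀ l, l < n' → 2 * l - r < m) :
    feqc i j n' ↔ feqc (2 * i + r) (2 * j + r) m := by
  constructor
  · intro h k hk
    set l := (k + r) / 2 with hl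
    have hln : l < n' := h1 k hk
    have hcase : k + r = 2 * l ∨ k + r = 2 * l + 1 := by omega
    have hval := h l hln
    have := tm_le_one (j + l); have := tm_le_one (i + l)
    rcases hcase with hc | hc
    · have e1 : 2 * j + r + k = 2 * (j + l) := by omega
      have e2 : 2 * i + r + k = 2 * (i + l) := by omega
      rw [e1, e2, tm_two_mul, tm_two_mul]
      omega
    · have e1 : 2 * j + r + k = 2 * (j + l) + 1 := by omega
      have e2 : 2 * i + r + k = 2 * (i + l) + 1 := by omega
      rw [e1, e2, tm_two_mul_add_one, tm_two_mul_add_one]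
      omega
  · intro h l hl
    have hk : 2 * l - r < m := h2 l hl
    have hval := h (2 * l - r) hk
    have := tm_le_one (j + l); have := tm_le_one (i + l)
    by_cases hc : l = 0 ∧ r = 1
    · obtain ⟨hl0, hr1⟩ := hc
      subst hl0
      have e1 : 2 * j + r + (2 * 0 - r) = 2 * j + 1 := by omega
      have e2 : 2 * i + r + (2 * 0 - r) = 2 * i + 1 := by omega
      rw [e1, e2, tm_two_mul_add_one, tm_two_mul_add_one] at hval
      have := tm_le_one j; have := tm_le_one i
      have ej : j + 0 = j := by omega
      have ei : i + 0 = i := by omega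
      rw [ej, ei]
      omega
    · have e1 : 2 * j + r + (2 * l - r) = 2 * (j + l) := by omega
      have e2 : 2 * i + r + (2 * l - r) = 2 * (i + l) := by omega
      rw [e1, e2, tm_two_mul, tm_two_mul] at hval
      exact hval

lemma occ_double (i n' m r : ℕ) (hr : r ≤ 1)
    (h1 : ∀ k, k < m → (k + r) / 2 < n') (h2 : ∀ l, l < n' → 2 * l - r < m)
    (hpure : ∀ j, occSet (2 * i + r) m j → j % 2 = r) :
    occSet (2 * i + r) m = fun y => ∃ x, occSet i n' x ∧ y = 2 * x + r := by
  funext y; apply propext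
  constructor
  · intro hy
    have hpar := hpure y hy
    obtain ⟨x, hx⟩ : ∃ x, y = 2 * x + r := ⟨y / 2, by omega⟩
    subst hx
    refine ⟨x, ?_, rfl⟩
    rcases hy with h | h
    · exact Or.inl ((feq_double i x n' m r hr h1 h2).mpr h)
    · exact Or.inr ((feqc_double i x n' m r hr h1 h2).mpr h)
  · rintro ⟨x, hx, rfl⟩
    rcases hx with h | h
    · exact Or.inl ((feq_double i x n' m r hr h1 h2).mp h)
    · exact Or.inr ((feqc_double i x n' m r hr h1 h2).mp h)

lemma itw_transfer (i n' m r : ℕ) (hr : r ≤ 1)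
    (h1 : ∀ k, k < m → (k + r) / 2 < n') (h2 : ∀ l, l < n' → 2 * l - r < m)
    (hpure : ∀ j, occSet (2 * i + r) m j → j % 2 = r) :
    ∀ q, itw (2 * i + r) m q = itw i n' q := by
  intro q
  unfold itw
  rw [occ_double i n' m r hr h1 h2 hpure,
    nth_image (occSet i n') (occ_infinite i n') r q]
  have := feq_double i (Nat.nth (occSet i n') q) n' m r hr h1 h2
  split_ifs with hA hB hB
  · rfl
  · exact absurd (this.mpr hA) hB
  · exact absurd (this.mp hB) hA
  · rfl

lemma ABBApat_double (i n' m r : ℕ) (hr : r ≤ 1)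
    (h1 : ∀ k, k < m → (k + r) / 2 < n') (h2 : ∀ l, l < n' → 2 * l - r < m)
    (hpure : ∀ j, occSet (2 * i + r) m j → j % 2 = r) :
    (ABBApat (2 * i + r) m ↔ ABBApat i n') := by
  unfold ABBApat
  constructor
  · intro h q; rw [← itw_transfer i n' m r hr h1 h2 hpure q]; exact h q
  · intro h q; rw [itw_transfer i n' m r hr h1 h2 hpure q]; exact h q





lemma mapRange_getD (f : ℕ → ℕ) (m k : ℕ) (h : k < m) :
    ((List.range m).map f).getD k 0 = f k := by
  rw [List.getD_eq_getElem _ _ (by simpa using h)]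
  simp

lemma fac_length (i n : ℕ) : (fac i n).length = n := by simp [fac]

lemma fac_getD (i n k : ℕ) (h : k < n) : (fac i n).getD k 0 = tm (i + k) :=
  mapRange_getD _ n k h

lemma feq_of_fac_eq (i j n : ℕ) (h : fac j n = fac i n) : feq i j n := by
  intro k hk
  have h2 := congrArg (fun w => w.getD k 0) h
  rw [fac_getD j n k hk, fac_getD i n k hk] at h2
  exact h2

def Phi (r m : ℕ) (z : List ℕ) : List ℕ :=
  (List.range m).map (fun k =>
    if (k + r) % 2 = 0 then z.getD ((k + r) / 2) 0 else 1 - z.getD ((k + r) / 2) 0)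

lemma Phi_fac (i n' m r : ℕ) (hcov : ∀ k, k < m → (k + r) / 2 < n') :
    fac (2 * i + r) m = Phi r m (fac i n') := by
  unfold fac Phi
  apply List.map_congr_left
  intro k hk
  rw [List.mem_range] at hk
  have hl := hcov k hk
  simp only [mapRange_getD (fun k => tm (i + k)) n' ((k + r) / 2) hl]
  set l := (k + r) / 2 with hldef
  have hcase : k + r = 2 * l ∨ k + r = 2 * l + 1 := by omega
  rcases hcase with hc | hc
  · rw [if_pos (by omega)]
    have e1 : 2 * i + r + k = 2 * (i + l) := by omega
    rw [e1, tm_two_mul]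
  · rw [if_neg (by omega)]
    have e1 : 2 * i + r + k = 2 * (i + l) + 1 := by omega
    rw [e1, tm_two_mul_add_one]

lemma Phi_injOn (r m n' : ℕ) (hr : r ≤ 1) (h2 : ∀ l, l < n' → 2 * l - r < m) :
    Set.InjOn (Phi r m) {z : List ℕ | z.length = n' ∧ ∀ a ∈ z, a ≤ 1} := by
  intro z1 hz1 z2 hz2 heq
  obtain ⟨hl1, hb1⟩ := hz1
  obtain ⟨hl2, hb2⟩ := hz2
  apply List.ext_getElem (by omega)
  intro l hL1 hL2
  have hln : l < n' := by omega
  have hk : 2 * l - r < m := h2 l hln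
  have hcomp := congrArg (fun w => w.getD (2 * l - r) 0) heq
  unfold Phi at hcomp
  rw [mapRange_getD _ m _ hk, mapRange_getD _ m _ hk] at hcomp
  have hg1 : z1.getD l 0 = z1[l] := List.getD_eq_getElem z1 0 (by omega)
  have hg2 : z2.getD l 0 = z2[l] := List.getD_eq_getElem z2 0 (by omega)
  have hm1 : z1[l] ≤ 1 := hb1 _ (List.getElem_mem _)
  have hm2 : z2[l] ≤ 1 := hb2 _ (List.getElem_mem _)
  by_cases hc : l = 0 ∧ r = 1
  · obtain ⟨hl0, hr1⟩ := hc
    subst hl0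
    rw [if_neg (by omega), if_neg (by omega)] at hcomp
    rw [show (2 * 0 - r + r) / 2 = 0 by omega] at hcomp
    rw [hg1, hg2] at hcomp
    omega
  · rw [if_pos (by omega), if_pos (by omega)] at hcomp
    rw [show (2 * l - r + r) / 2 = l by omega] at hcomp
    rw [hg1, hg2] at hcomp
    exact hcomp

lemma Aset_subset_good (n : ℕ) :
    {w : List ℕ | ∃ i, fac i n = w ∧ ABBApat i n} ⊆
      {z : List ℕ | z.length = n ∧ ∀ a ∈ z, a ≤ 1} := by
  rintro w ⟨i, rfl, -⟩
  refine ⟨fac_length i n, ?_⟩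
  intro a ha
  unfold fac at ha
  rw [List.mem_map] at ha
  obtain ⟨k, -, rfl⟩ := ha
  exact tm_le_one _

lemma Aset_finite (n : ℕ) :
    {w : List ℕ | ∃ i, fac i n = w ∧ ABBApat i n}.Finite := by
  classical
  have : {w : List ℕ | ∃ i, fac i n = w ∧ ABBApat i n} ⊆
      Set.range (fun v : Fin n → Fin 2 =>
        (List.range n).map (fun k => if h : k < n then (v ⟨k, h⟩ : ℕ) else 0)) := by
    rintro w ⟨i, rfl, -⟩
    refine ⟨fun k => ⟨tm (i + k.val), by have := tm_le_one (i + k.val); omega⟩, ?_⟩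
    unfold fac
    apply List.map_congr_left
    intro k hk
    rw [List.mem_range] at hk
    rw [dif_pos hk]
  exact Set.Finite.subset (Set.finite_range _) this

section recursion

lemma pure_of_even (i m : ℕ) (hm : 4 ≤ m) :
    ∀ j, occSet (2 * i + 0) m j → j % 2 = 0 := by
  intro j hj
  have := purity (2 * i + 0) m hm j (2 * i + 0) hj (occ_self _ _)
  omega

lemma pure_of_odd (i m : ℕ) (hm : 4 ≤ m) :
    ∀ j, occSet (2 * i + 1) m j → j % 2 = 1 := by
  intro j hj
  have := purity (2 * i + 1) m hm j (2 * i + 1) hj (occ_self _ _)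
  omega

lemma Aset_even (n : ℕ) (hn : 1 ≤ n) :
    {w : List ℕ | ∃ i, fac i (2 * n + 2) = w ∧ ABBApat i (2 * n + 2)} =
      (Phi 0 (2 * n + 2)) '' {w : List ℕ | ∃ i, fac i (n + 1) = w ∧ ABBApat i (n + 1)} ∪
      (Phi 1 (2 * n + 2)) '' {w : List ℕ | ∃ i, fac i (n + 2) = w ∧ ABBApat i (n + 2)} := by
  have hm4 : 4 ≤ 2 * n + 2 := by omega
  have h10 : ∀ k, k < 2 * n + 2 → (k + 0) / 2 < n + 1 := by intro k hk; omega
  have h20 : ∀ l, l < n + 1 → 2 * l - 0 < 2 * n + 2 := by intro l hl; omega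
  have h11 : ∀ k, k < 2 * n + 2 → (k + 1) / 2 < n + 2 := by intro k hk; omega
  have h21 : ∀ l, l < n + 2 → 2 * l - 1 < 2 * n + 2 := by intro l hl; omega
  ext w
  constructor
  · rintro ⟨i2, rfl, hp⟩
    rcases Nat.even_or_odd i2 with ⟨i, hi⟩ | ⟨i, hi⟩
    · obtain ⟨i, rfl⟩ : ∃ i, i2 = 2 * i + 0 := ⟨i, by omega⟩
      left
      exact ⟨fac i (n + 1), ⟨i, rfl,
        (ABBApat_double i (n + 1) (2 * n + 2) 0 (by omega) h10 h20
          (pure_of_even i _ hm4)).mp hp⟩,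
        (Phi_fac i (n + 1) (2 * n + 2) 0 h10).symm⟩
    · obtain ⟨i, rfl⟩ : ∃ i, i2 = 2 * i + 1 := ⟨i, by omega⟩
      right
      exact ⟨fac i (n + 2), ⟨i, rfl,
        (ABBApat_double i (n + 2) (2 * n + 2) 1 (by omega) h11 h21
          (pure_of_odd i _ hm4)).mp hp⟩,
        (Phi_fac i (n + 2) (2 * n + 2) 1 h11).symm⟩
  · rintro (⟨z, ⟨i, rfl, hz⟩, rfl⟩ | ⟨z, ⟨i, rfl, hz⟩, rfl⟩)
    · exact ⟨2 * i + 0, Phi_fac i (n + 1) (2 * n + 2) 0 h10,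
        (ABBApat_double i (n + 1) (2 * n + 2) 0 (by omega) h10 h20
          (pure_of_even i _ hm4)).mpr hz⟩
    · exact ⟨2 * i + 1, Phi_fac i (n + 2) (2 * n + 2) 1 h11,
        (ABBApat_double i (n + 2) (2 * n + 2) 1 (by omega) h11 h21
          (pure_of_odd i _ hm4)).mpr hz⟩

lemma Aset_odd (n : ℕ) (hn : 2 ≤ n) :
    {w : List ℕ | ∃ i, fac i (2 * n + 1) = w ∧ ABBApat i (2 * n + 1)} =
      (Phi 0 (2 * n + 1)) '' {w : List ℕ | ∃ i, fac i (n + 1) = w ∧ ABBApat i (n + 1)} ∪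
      (Phi 1 (2 * n + 1)) '' {w : List ℕ | ∃ i, fac i (n + 1) = w ∧ ABBApat i (n + 1)} := by
  have hm4 : 4 ≤ 2 * n + 1 := by omega
  have h10 : ∀ k, k < 2 * n + 1 → (k + 0) / 2 < n + 1 := by intro k hk; omega
  have h20 : ∀ l, l < n + 1 → 2 * l - 0 < 2 * n + 1 := by intro l hl; omega
  have h11 : ∀ k, k < 2 * n + 1 → (k + 1) / 2 < n + 1 := by intro k hk; omega
  have h21 : ∀ l, l < n + 1 → 2 * l - 1 < 2 * n + 1 := by intro l hl; omega
  ext w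
  constructor
  · rintro ⟨i2, rfl, hp⟩
    rcases Nat.even_or_odd i2 with ⟨i, hi⟩ | ⟨i, hi⟩
    · obtain ⟨i, rfl⟩ : ∃ i, i2 = 2 * i + 0 := ⟨i, by omega⟩
      left
      exact ⟨fac i (n + 1), ⟨i, rfl,
        (ABBApat_double i (n + 1) (2 * n + 1) 0 (by omega) h10 h20
          (pure_of_even i _ hm4)).mp hp⟩,
        (Phi_fac i (n + 1) (2 * n + 1) 0 h10).symm⟩
    · obtain ⟨i, rfl⟩ : ∃ i, i2 = 2 * i + 1 := ⟨i, by omega⟩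
      right
      exact ⟨fac i (n + 1), ⟨i, rfl,
        (ABBApat_double i (n + 1) (2 * n + 1) 1 (by omega) h11 h21
          (pure_of_odd i _ hm4)).mp hp⟩,
        (Phi_fac i (n + 1) (2 * n + 1) 1 h11).symm⟩
  · rintro (⟨z, ⟨i, rfl, hz⟩, rfl⟩ | ⟨z, ⟨i, rfl, hz⟩, rfl⟩)
    · exact ⟨2 * i + 0, Phi_fac i (n + 1) (2 * n + 1) 0 h10,
        (ABBApat_double i (n + 1) (2 * n + 1) 0 (by omega) h10 h20
          (pure_of_even i _ hm4)).mpr hz⟩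
    · exact ⟨2 * i + 1, Phi_fac i (n + 1) (2 * n + 1) 1 h11,
        (ABBApat_double i (n + 1) (2 * n + 1) 1 (by omega) h11 h21
          (pure_of_odd i _ hm4)).mpr hz⟩

lemma Aset_disjoint (m n0 n1 : ℕ) (hm : 4 ≤ m)
    (hc0 : ∀ k, k < m → (k + 0) / 2 < n0) (hc1 : ∀ k, k < m → (k + 1) / 2 < n1) :
    Disjoint ((Phi 0 m) '' {w : List ℕ | ∃ i, fac i n0 = w ∧ ABBApat i n0})
      ((Phi 1 m) '' {w : List ℕ | ∃ i, fac i n1 = w ∧ ABBApat i n1}) := by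
  rw [Set.disjoint_left]
  rintro w ⟨z0, ⟨i0, rfl, -⟩, rfl⟩ ⟨z1, ⟨i1, rfl, -⟩, heq⟩
  have e0 : Phi 0 m (fac i0 n0) = fac (2 * i0 + 0) m := (Phi_fac i0 n0 m 0 hc0).symm
  have e1 : Phi 1 m (fac i1 n1) = fac (2 * i1 + 1) m := (Phi_fac i1 n1 m 1 hc1).symm
  rw [e0, e1] at heq
  have hfeq : feq (2 * i0 + 0) (2 * i1 + 1) m := feq_of_fac_eq _ _ _ heq
  have := purity (2 * i0 + 0) m hm (2 * i1 + 1) (2 * i0 + 0) (Or.inl hfeq) (occ_self _ _)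
  omega

lemma gcount_even (n : ℕ) (hn : 1 ≤ n) :
    gcount (2 * n + 2) = gcount (n + 1) + gcount (n + 2) := by
  unfold gcount
  rw [Aset_even n hn]
  have h10 : ∀ k, k < 2 * n + 2 → (k + 0) / 2 < n + 1 := by intro k hk; omega
  have h11 : ∀ k, k < 2 * n + 2 → (k + 1) / 2 < n + 2 := by intro k hk; omega
  have h20 : ∀ l, l < n + 1 → 2 * l - 0 < 2 * n + 2 := by intro l hl; omega
  have h21 : ∀ l, l < n + 2 → 2 * l - 1 < 2 * n + 2 := by intro l hl; omega
  rw [Set.ncard_union_eq (Aset_disjoint (2 * n + 2) (n + 1) (n + 2) (by omega) h10 h11)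
      ((Aset_finite (n + 1)).image _) ((Aset_finite (n + 2)).image _),
    Set.ncard_image_of_injOn ((Phi_injOn 0 (2 * n + 2) (n + 1) (by omega) h20).mono
      (Aset_subset_good (n + 1))),
    Set.ncard_image_of_injOn ((Phi_injOn 1 (2 * n + 2) (n + 2) (by omega) h21).mono
      (Aset_subset_good (n + 2)))]

lemma gcount_odd (n : ℕ) (hn : 2 ≤ n) :
    gcount (2 * n + 1) = 2 * gcount (n + 1) := by
  unfold gcount
  rw [Aset_odd n hn]
  have h10 : ∀ k, k < 2 * n + 1 → (k + 0) / 2 < n + 1 := by intro k hk; omega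
  have h11 : ∀ k, k < 2 * n + 1 → (k + 1) / 2 < n + 1 := by intro k hk; omega
  have h20 : ∀ l, l < n + 1 → 2 * l - 0 < 2 * n + 1 := by intro l hl; omega
  have h21 : ∀ l, l < n + 1 → 2 * l - 1 < 2 * n + 1 := by intro l hl; omega
  rw [Set.ncard_union_eq (Aset_disjoint (2 * n + 1) (n + 1) (n + 1) (by omega) h10 h11)
      ((Aset_finite (n + 1)).image _) ((Aset_finite (n + 1)).image _),
    Set.ncard_image_of_injOn ((Phi_injOn 0 (2 * n + 1) (n + 1) (by omega) h20).mono
      (Aset_subset_good (n + 1))),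
    Set.ncard_image_of_injOn ((Phi_injOn 1 (2 * n + 1) (n + 1) (by omega) h21).mono
      (Aset_subset_good (n + 1)))]
  omega

end recursion

lemma tm_three : tm 3 = 0 := by
  have h := tm_two_mul_add_one 1
  rw [show 2 * 1 + 1 = 3 by omega, tm_one] at h
  omega

lemma gcount_one : gcount 1 = 0 := by
  unfold gcount
  have : {w : List ℕ | ∃ i, fac i 1 = w ∧ ABBApat i 1} = ∅ := by
    ext w
    simp only [Set.mem_setOf_eq, Set.mem_empty_iff_false, iff_false]
    rintro ⟨i, -, hp⟩
    exact not_abba_1 i hp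
  rw [this, Set.ncard_empty]

lemma gcount_two : gcount 2 = 0 := by
  unfold gcount
  have : {w : List ℕ | ∃ i, fac i 2 = w ∧ ABBApat i 2} = ∅ := by
    ext w
    simp only [Set.mem_setOf_eq, Set.mem_empty_iff_false, iff_false]
    rintro ⟨i, -, hp⟩
    exact not_abba_2 i hp
  rw [this, Set.ncard_empty]

lemma fac_three_eq (i j : ℕ) (h0 : tm j = tm i) (h1 : tm (j + 1) = tm (i + 1))
    (h2 : tm (j + 2) = tm (i + 2)) : fac i 3 = fac j 3 := by
  unfold fac
  apply List.map_congr_left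
  intro k hk
  rw [List.mem_range] at hk
  interval_cases k
  · simpa using h0.symm
  · exact h1.symm
  · exact h2.symm

lemma gcount_three : gcount 3 = 1 := by
  unfold gcount
  have hv0 : tm 2 = 1 := tm_two
  have hv1 : tm 3 = 0 := tm_three
  have hv2 : tm 4 = 1 := tm_four
  have : {w : List ℕ | ∃ i, fac i 3 = w ∧ ABBApat i 3} = {fac 2 3} := by
    ext w
    simp only [Set.mem_setOf_eq, Set.mem_singleton_iff]
    constructor
    · rintro ⟨i, rfl, hp⟩
      by_cases hval : tm i = 1 ∧ tm (i + 1) = 0 ∧ tm (i + 2) = 1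
      · obtain ⟨a, b, c⟩ := hval
        exact (fac_three_eq i 2 (by rw [hv0, a]) (by rw [show (2:ℕ)+1 = 3 by omega, hv1, b])
          (by rw [show (2:ℕ)+2 = 4 by omega, hv2, c]))
      · exact absurd hp (not_abba_3 i hval)
    · rintro rfl
      exact ⟨2, rfl, abba_101 2 hv0
        (by rw [show (2:ℕ)+1 = 3 by omega]; exact hv1)
        (by rw [show (2:ℕ)+2 = 4 by omega]; exact hv2)⟩
  rw [this, Set.ncard_singleton]

/-- g(n+1) = A060973(n) for all n ≥ 0. -/
theorem tm_gcount_A060973 (b : ℕ → ℕ)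
    (h0 : b 0 = 0) (h1 : b 1 = 0) (h2 : b 2 = 1)
    (he : ∀ n, b (2 * n) = 2 * b n + (if n = 1 then 1 else 0))
    (ho : ∀ n, b (2 * n + 1) = b (n + 1) + b n) :
    ∀ n, gcount (n + 1) = b n := by
  intro n
  induction n using Nat.strong_induction_on with
  | _ n ih =>
    match n, ih with
    | 0, _ => rw [gcount_one, h0]
    | 1, _ => rw [gcount_two, h1]
    | 2, _ => rw [gcount_three, h2]
    | (n + 3), ih =>
      rcases Nat.even_or_odd (n + 3) with ⟨k, hk⟩ | ⟨k, hk⟩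
      · -- n + 3 = 2k with k ≥ 2 : gcount (2k+1) = 2 gcount (k+1) = 2 b k = b (2k)
        have hk2 : 2 ≤ k := by omega
        have e1 : n + 3 + 1 = 2 * k + 1 := by omega
        rw [e1, gcount_odd k hk2]
        have e2 : n + 3 = 2 * k := by omega
        rw [e2, he k]
        have hlt : k < n + 3 := by omega
        obtain ⟨k', rfl⟩ : ∃ k', k = k' + 1 := ⟨k - 1, by omega⟩
        rw [ih (k' + 1) (by omega)]
        have : ¬ (k' + 1 = 1) := by omega
        rw [if_neg this]
        omega
      · -- n + 3 = 2k+1 with k ≥ 1 : gcount (2k+2) = gcount (k+1) + gcount (k+2)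
        have hk1 : 1 ≤ k := by omega
        have e1 : n + 3 + 1 = 2 * k + 2 := by omega
        rw [e1, gcount_even k hk1]
        have e2 : n + 3 = 2 * k + 1 := by omega
        rw [e2, ho k]
        rw [ih k (by omega), ih (k + 1) (by omega)]
        omega
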